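/- Non-existence of an exactly learnable Hamiltonian for forward-Euler HNN training (Appendix A, concrete form): Let h ≠ 0 with cos h ≠ 1, and let Ω ⊆ ℝ² be a nonempty open set. Then there is no C² function Ĥ : Ω → ℝ satisfying, for all (p,q) ∈ Ω, the forward-Euler identities −∂Ĥ/∂q(p,q) = (p·cos h − q·sin h − p)/h and ∂Ĥ/∂p(p,q) = (p·sin h + q·cos h − q)/h, where the right-hand sides are the finite differences (φ_h(p,q) − (p,q))/h of the exact harmonic-oscillator flow. -/

import Mathlib

/-!
The forward-Euler data prescribe the gradient of `Ĥ` as an affine vector field whose mixed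
partial derivatives are `∂_q ∂_p Ĥ = (cos h - 1) / h` and `∂_p ∂_q Ĥ = (1 - cos h) / h`.
For a `C²` function these must agree (Schwarz), forcing `cos h = 1`.
-/

open Filter Topology

theorem ContDiffAt.fderiv_fderiv_apply_comm {E F : Type*} [NormedAddCommGroup E]
    [NormedSpace ℝ E] [NormedAddCommGroup F] [NormedSpace ℝ F] {f : E → F} {x : E}
    (hf : ContDiffAt ℝ 2 f x) (u v : E) :
    fderiv ℝ (fun y => fderiv ℝ f y v) x u = fderiv ℝ (fun y => fderiv ℝ f y u) x v := by
  have hdf : DifferentiableAt ℝ (fderiv ℝ f) x :=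
    (hf.fderiv_right (m := 1) le_rfl).differentiableAt one_ne_zero
  simp only [fderiv_clm_apply hdf (differentiableAt_const _), fderiv_fun_const, Pi.zero_apply,
    ContinuousLinearMap.comp_zero, zero_add, ContinuousLinearMap.flip_apply]
  exact hf.isSymmSndFDerivAt (by simp) u v

theorem fderiv_const_mul_fst_add_const_mul_snd_apply (a b : ℝ) (x v : ℝ × ℝ) :
    fderiv ℝ (fun y : ℝ × ℝ => a * y.1 + b * y.2) x v = a * v.1 + b * v.2 := by
  have hderiv : HasFDerivAt (fun y : ℝ × ℝ => a * y.1 + b * y.2)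
      (a • ContinuousLinearMap.fst ℝ ℝ ℝ + b • ContinuousLinearMap.snd ℝ ℝ ℝ) x :=
    (hasFDerivAt_fst.const_mul a).add (hasFDerivAt_snd.const_mul b)
  simp [hderiv.fderiv]

theorem stmt2 (h : ℝ) (hh : h ≠ 0) (hcos : Real.cos h ≠ 1)
    (Ω : Set (ℝ × ℝ)) (hΩ : IsOpen Ω) (hne : Ω.Nonempty) :
    ¬ ∃ H : ℝ × ℝ → ℝ, ContDiffOn ℝ 2 H Ω ∧
      ∀ p q : ℝ, (p, q) ∈ Ω →
        (-(fderiv ℝ H (p, q) (0, 1)) = (p * Real.cos h - q * Real.sin h - p) / h ∧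
          fderiv ℝ H (p, q) (1, 0) = (p * Real.sin h + q * Real.cos h - q) / h) := by
  rintro ⟨H, hH, hEuler⟩
  obtain ⟨x, hx⟩ := hne
  have hΩx : Ω ∈ 𝓝 x := hΩ.mem_nhds hx
  have hdp : (fun y => fderiv ℝ H y (1, 0)) =ᶠ[𝓝 x]
      fun y => Real.sin h / h * y.1 + (Real.cos h - 1) / h * y.2 := by
    filter_upwards [hΩx] with ⟨p, q⟩ hpq
    rw [(hEuler p q hpq).2]
    ring
  have hdq : (fun y => fderiv ℝ H y (0, 1)) =ᶠ[𝓝 x]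
      fun y => (1 - Real.cos h) / h * y.1 + Real.sin h / h * y.2 := by
    filter_upwards [hΩx] with ⟨p, q⟩ hpq
    linear_combination -(hEuler p q hpq).1
  have hmixed := (hH.contDiffAt hΩx).fderiv_fderiv_apply_comm (1, 0) (0, 1)
  rw [hdq.fderiv_eq, hdp.fderiv_eq, fderiv_const_mul_fst_add_const_mul_snd_apply,
    fderiv_const_mul_fst_add_const_mul_snd_apply] at hmixed
  norm_num at hmixed
  have hzero : (Real.cos h - 1) / h = 0 := by linear_combination -hmixed / 2
  exact hcos (sub_eq_zero.1 ((div_eq_zero_iff.1 hzero).resolve_right hh))
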